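/- arXiv:2502.16078 — 5 statements merged into one kernel-verified Lean document; each statement's English description precedes it below -/
import Mathlib

section
/- Let Ψ be a proper colouring of the exponential graph K_n^G (G loopless) with colour set containing {1,...,n}, such that Ψ(const_i) = i for every i ∈ {1,...,n}. Then for every vertex φ of K_n^G, either Ψ(φ) ∈ Im(φ) or Ψ(φ) ∉ {1,...,n}. -/
open SimpleGraph

universe u v w

/-- The categorical (tensor) product of two simple graphs. -/
def tensorGraph {α : Type u} {β : Type v} (G : SimpleGraph α) (H : SimpleGraph β) :
    SimpleGraph (α × β) where
  Adj p q := G.Adj p.1 q.1 ∧ H.Adj p.2 q.2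
  symm := ⟨fun p q h => ⟨h.1.symm, h.2.symm⟩⟩
  loopless := ⟨fun p h => G.loopless.irrefl p.1 h.1⟩


/-- Adjacency of the exponential graph `K^G` (loops allowed). -/
def expAdj {α : Type u} {γ : Type w} (K : SimpleGraph γ) (G : SimpleGraph α)
    (f g : α → γ) : Prop :=
  ∀ ⦃x y : α⦄, G.Adj x y → K.Adj (f x) (g y)

/-- The exponential graph `K^G` as a simple graph (loops removed). -/
def expGraph {α : Type u} {γ : Type w} (K : SimpleGraph γ) (G : SimpleGraph α) :
    SimpleGraph (α → γ) where
  Adj f g := f ≠ g ∧ expAdj K G f g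
  symm := ⟨fun f g h => ⟨h.1.symm, fun x y hxy => (h.2 hxy.symm).symm⟩⟩
  loopless := ⟨fun f h => h.1 rfl⟩

theorem expGraph_top_adj_const_of_notMem_range {α : Type*} {γ : Type*} [Nonempty α]
    (G : SimpleGraph α) {φ : α → γ} {i : γ} (hi : i ∉ Set.range φ) :
    (expGraph (⊤ : SimpleGraph γ) G).Adj (Function.const α i) φ :=
  ⟨fun h => hi ⟨Classical.arbitrary α, (congrFun h _).symm⟩,
    fun _ y _ => (top_adj _ _).2 fun h => hi ⟨y, h.symm⟩⟩

theorem colour_in_image_or_outside {α : Type u} {C : Type w} [Nonempty α]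
    (G : SimpleGraph α) (n : ℕ) (e : Fin n ↪ C) (Ψ : (α → Fin n) → C)
    (hproper : ∀ f g : α → Fin n,
      (expGraph (⊤ : SimpleGraph (Fin n)) G).Adj f g → Ψ f ≠ Ψ g)
    (hconst : ∀ i : Fin n, Ψ (Function.const α i) = e i) :
    ∀ φ : α → Fin n, Ψ φ ∈ e '' Set.range φ ∨ Ψ φ ∉ Set.range e := by
  intro φ
  refine or_iff_not_imp_right.2 fun hΨ => ?_
  obtain ⟨i, hi⟩ := not_not.1 hΨ
  refine ⟨i, ?_, hi⟩
  by_contra hiφ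
  exact hproper _ _ (expGraph_top_adj_const_of_notMem_range G hiφ) (by rw [hconst, hi])
end

section
/- If for every graph G with χ(G) > n the exponential graph K_n^G satisfies χ(K_n^G) ≤ n, then for all graphs G and H with χ(G) > n and χ(H) > n, χ(G × H) > n; conversely, if there is a graph G with χ(G) > n and χ(K_n^G) > n, then χ(G × K_n^G) ≤ n, giving a counterexample. -/
open SimpleGraph

universe u v w

namespace expGraph

variable {α : Type u} {β : Type v} {γ : Type w} {G : SimpleGraph α} {H : SimpleGraph β}
  {K : SimpleGraph γ}

variable (G K) in
def eval : tensorGraph G (expGraph K G) →g K where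
  toFun p := p.2 p.1
  map_rel' h := h.2.2 h.1

/-- Adjacent vertices of `H` cannot curry to the same map, since that map would be a homomorphism
`G → K`; so `hG` makes up for `K^G` having no loops. -/
def curry (c : tensorGraph G H →g K) (hG : IsEmpty (G →g K)) : H →g expGraph K G where
  toFun b a := c (a, b)
  map_rel' {b b'} hb := by
    refine ⟨fun heq => hG.false ⟨fun a => c (a, b), fun {x y} hxy => ?_⟩,
      fun x y hxy => c.map_rel ⟨hxy, hb⟩⟩
    have hc : K.Adj (c (x, b)) (c (y, b')) := c.map_rel ⟨hxy, hb⟩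
    rwa [← congrFun heq y] at hc

end expGraph

theorem colorable_of_tensorGraph_colorable {α : Type u} {β : Type v} {G : SimpleGraph α}
    {H : SimpleGraph β} {n : ℕ} (hG : ¬ G.Colorable n)
    (hexp : (expGraph (⊤ : SimpleGraph (Fin n)) G).Colorable n)
    (hGH : (tensorGraph G H).Colorable n) : H.Colorable n :=
  hexp.of_hom (expGraph.curry hGH.some (not_nonempty_iff.mp hG))

theorem tensorGraph_expGraph_colorable {α : Type u} (G : SimpleGraph α) (n : ℕ) :
    (tensorGraph G (expGraph (⊤ : SimpleGraph (Fin n)) G)).Colorable n :=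
  ⟨expGraph.eval G ⊤⟩

theorem hedetniemi_iff_exp_version (n : ℕ) :
    ((∀ {α : Type u} (G : SimpleGraph α), ¬ G.Colorable n →
        (expGraph (⊤ : SimpleGraph (Fin n)) G).Colorable n) →
      ∀ {α β : Type u} (G : SimpleGraph α) (H : SimpleGraph β),
        ¬ G.Colorable n → ¬ H.Colorable n → ¬ (tensorGraph G H).Colorable n) ∧
    (∀ {α : Type u} (G : SimpleGraph α), ¬ G.Colorable n →
        ¬ (expGraph (⊤ : SimpleGraph (Fin n)) G).Colorable n →
        (tensorGraph G (expGraph (⊤ : SimpleGraph (Fin n)) G)).Colorable n) := by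
  exact ⟨fun hyp _ _ G H hG hH hGH => hH (colorable_of_tensorGraph_colorable hG (hyp G hG) hGH),
    fun G _ _ => tensorGraph_expGraph_colorable G n⟩
end

section
/- An n-colouring (proper) of the lexicographic product F[K_q] is equivalent to a homomorphism from F to the Kneser graph K(n,q): F[K_q] is n-colourable if and only if F → K(n,q). -/
open SimpleGraph

universe u v w

/-- The lexicographic blow-up F[K_q]: each vertex replaced by a q-clique. -/
def lexBlow {α : Type u} (F : SimpleGraph α) (q : ℕ) : SimpleGraph (α × Fin q) where
  Adj p r := F.Adj p.1 r.1 ∨ (p.1 = r.1 ∧ p.2 ≠ r.2)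
  symm := by
    constructor
    intro p r h
    rcases h with h | ⟨h1, h2⟩
    · exact Or.inl h.symm
    · exact Or.inr ⟨h1.symm, h2.symm⟩
  loopless := by
    constructor
    intro p h
    rcases h with h | ⟨_, h2⟩
    · exact F.loopless.irrefl p.1 h
    · exact h2 rfl

/-- The Kneser graph K(n,q): q-subsets of an n-set, adjacent iff disjoint. -/
def kneserGraph (n q : ℕ) : SimpleGraph {s : Finset (Fin n) // s.card = q} where
  Adj A B := A ≠ B ∧ Disjoint A.1 B.1
  symm := ⟨fun A B h => ⟨h.1.symm, h.2.symm⟩⟩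
  loopless := ⟨fun A h => h.1 rfl⟩

/-! A proper colouring of `F[K_q]` assigns to each vertex `x` of `F` the `q` distinct colours of
its clique, and these colour sets are disjoint along the edges of `F`: this is exactly a
homomorphism into the Kneser graph. Conversely, enumerating the `q`-set `f x` colours the clique
over `x`. -/

section LexBlow

variable {α : Type u} {β : Type v} {F : SimpleGraph α} {q : ℕ}

theorem lexBlow_adj_of_adj {x y : α} (h : F.Adj x y) (i j : Fin q) :
    (lexBlow F q).Adj (x, i) (y, j) :=
  Or.inl h

theorem lexBlow_adj_of_ne (x : α) {i j : Fin q} (h : i ≠ j) :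
    (lexBlow F q).Adj (x, i) (x, j) :=
  Or.inr ⟨rfl, h⟩

def lexBlowColoring (g : α → Fin q → β) (hinj : ∀ x, Function.Injective (g x))
    (hdisj : ∀ x y, F.Adj x y → ∀ i j, g x i ≠ g y j) : (lexBlow F q).Coloring β :=
  Coloring.mk (fun p => g p.1 p.2) <| by
    rintro ⟨x, i⟩ ⟨y, j⟩ (h | ⟨rfl, hij⟩)
    · exact hdisj x y h i j
    · exact (hinj x).ne hij

variable [DecidableEq β]

def cliqueColors (c : (lexBlow F q).Coloring β) (x : α) : Finset β :=
  Finset.univ.image fun i => c (x, i)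

theorem card_cliqueColors (c : (lexBlow F q).Coloring β) (x : α) :
    (cliqueColors c x).card = q := by
  have hinj : Function.Injective fun i : Fin q => c (x, i) := fun _ _ hij =>
    by_contra fun hne => c.valid (lexBlow_adj_of_ne x hne) hij
  rw [cliqueColors, Finset.card_image_of_injective _ hinj, Finset.card_univ, Fintype.card_fin]

theorem disjoint_cliqueColors (c : (lexBlow F q).Coloring β) {x y : α} (h : F.Adj x y) :
    Disjoint (cliqueColors c x) (cliqueColors c y) := by
  simp only [cliqueColors, Finset.disjoint_left, Finset.mem_image, Finset.mem_univ, true_and]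
  rintro _ ⟨i, rfl⟩ ⟨j, hj⟩
  exact c.valid (lexBlow_adj_of_adj h i j) hj.symm

end LexBlow

theorem kneserGraph_adj_of_disjoint {n q : ℕ} (hq : 0 < q)
    {A B : {s : Finset (Fin n) // s.card = q}} (h : Disjoint A.1 B.1) :
    (kneserGraph n q).Adj A B := by
  refine ⟨fun hAB => ?_, h⟩
  rw [hAB, disjoint_self, Finset.bot_eq_empty, ← Finset.card_eq_zero, B.2] at h
  omega

section Kneser

variable {α : Type u} {F : SimpleGraph α} {n q : ℕ}

def kneserHomOfColoring (hq : 0 < q) (c : (lexBlow F q).Coloring (Fin n)) :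
    F →g kneserGraph n q where
  toFun x := ⟨cliqueColors c x, card_cliqueColors c x⟩
  map_rel' h := kneserGraph_adj_of_disjoint hq (disjoint_cliqueColors c h)

def lexBlowColoringOfHom (f : F →g kneserGraph n q) : (lexBlow F q).Coloring (Fin n) :=
  lexBlowColoring (fun x i => ((f x).1.orderIsoOfFin (f x).2 i : Fin n))
    (fun x => Subtype.val_injective.comp ((f x).1.orderIsoOfFin (f x).2).injective)
    (fun x y h i j hij => Finset.disjoint_left.mp (f.map_adj h).2
      ((f x).1.orderIsoOfFin (f x).2 i).2 (hij ▸ ((f y).1.orderIsoOfFin (f y).2 j).2))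

end Kneser

theorem lex_colorable_iff_hom_kneser {α : Type u} (F : SimpleGraph α) (n q : ℕ)
    (hq : 0 < q) :
    (lexBlow F q).Colorable n ↔ Nonempty (F →g kneserGraph n q) :=
  ⟨fun ⟨c⟩ => ⟨kneserHomOfColoring hq c⟩, fun ⟨f⟩ => ⟨lexBlowColoringOfHom f⟩⟩
end

section
/- For digraphs G and H with underlying undirected graphs \underline{G}, \underline{H}, one has E(\underline{G} × \underline{H}) = E(\underline{G × H}) ∪ E(\underline{G × H^{-1}}), and consequently χ(\underline{G} × \underline{H}) ≤ χ(G × H) · χ(G × H^{-1}). -/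
open SimpleGraph

universe u v w

/-- Existence of a digraph homomorphism between relation-digraphs. -/
def DigraphHomEx {V : Type u} {W : Type v} (E : V → V → Prop) (F : W → W → Prop) : Prop :=
  ∃ f : V → W, ∀ ⦃x y : V⦄, E x y → F (f x) (f y)

/-- The categorical product of relation-digraphs. -/
def tensorRel {V : Type u} {W : Type v} (E : V → V → Prop) (F : W → W → Prop) :
    V × W → V × W → Prop :=
  fun p q => E p.1 q.1 ∧ F p.2 q.2

/-- The directed cycle of length n: arcs i → i + 1 on ZMod n. -/
def dirCycleAdj (n : ℕ) : ZMod n → ZMod n → Prop := fun i j => j = i + 1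

/-!
Orient an edge of the product of the underlying graphs so that its first coordinates form an
arc of `E`; the second coordinates then form an arc of `F` pointing forwards or backwards, i.e.
the edge comes from `G × H` or from `G × H⁻¹`. A union of two graphs is coloured by pairs of
colours of the two graphs.
-/

namespace SimpleGraph

variable {V : Type*}

theorem fromRel_adj_iff_of_irrefl {r : V → V → Prop} (hr : ∀ x, ¬ r x x) {x y : V} :
    (fromRel r).Adj x y ↔ r x y ∨ r y x := by
  refine ⟨And.right, fun h => ⟨?_, h⟩⟩
  rintro rfl
  exact hr x (h.elim id id)

theorem Colorable.sup {G₁ G₂ : SimpleGraph V} {n m : ℕ} (h₁ : G₁.Colorable n)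
    (h₂ : G₂.Colorable m) : (G₁ ⊔ G₂).Colorable (n * m) := by
  obtain ⟨c₁⟩ := h₁
  obtain ⟨c₂⟩ := h₂
  let c : (G₁ ⊔ G₂).Coloring (Fin n × Fin m) := Coloring.mk (fun v => (c₁ v, c₂ v)) <| by
    rintro u v (h | h) huv
    · exact c₁.valid h (congrArg Prod.fst huv)
    · exact c₂.valid h (congrArg Prod.snd huv)
  simpa using c.colorable

theorem chromaticNumber_sup_le (G₁ G₂ : SimpleGraph V) :
    (G₁ ⊔ G₂).chromaticNumber ≤ G₁.chromaticNumber * G₂.chromaticNumber := by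
  cases isEmpty_or_nonempty V
  · simp [chromaticNumber_eq_zero_of_isEmpty]
  by_cases h : G₁.chromaticNumber ≠ ⊤ ∧ G₂.chromaticNumber ≠ ⊤
  · obtain ⟨h₁, h₂⟩ := h
    have := ((colorable_of_chromaticNumber_ne_top h₁).sup
      (colorable_of_chromaticNumber_ne_top h₂)).chromaticNumber_le
    rwa [Nat.cast_mul, ENat.natCast_toNat h₁, ENat.natCast_toNat h₂] at this
  · have h₁ : G₁.chromaticNumber ≠ 0 := by simp [chromaticNumber_eq_zero_iff]
    have h₂ : G₂.chromaticNumber ≠ 0 := by simp [chromaticNumber_eq_zero_iff]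
    rcases not_and_or.mp h with h | h <;> rw [not_not.mp h]
    · simp [ENat.top_mul h₂]
    · simp [ENat.mul_top h₁]

end SimpleGraph

theorem tensorRel_irrefl {V W : Type*} {E : V → V → Prop} (F : W → W → Prop)
    (hE : ∀ x, ¬ E x x) (p : V × W) : ¬ tensorRel E F p p :=
  fun h => hE p.1 h.1

theorem tensorGraph_fromRel {α β : Type*} {E : α → α → Prop} {F : β → β → Prop}
    (hE : ∀ x, ¬ E x x) (hF : ∀ y, ¬ F y y) :
    tensorGraph (fromRel E) (fromRel F) =
      fromRel (tensorRel E F) ⊔ fromRel (tensorRel E (flip F)) := by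
  ext ⟨x, y⟩ ⟨x', y'⟩
  simp only [tensorGraph, sup_adj, fromRel_adj_iff_of_irrefl hE, fromRel_adj_iff_of_irrefl hF,
    fromRel_adj_iff_of_irrefl (tensorRel_irrefl _ hE), tensorRel, flip]
  tauto

theorem underlying_tensor_eq_and_chromatic {α : Type u} {β : Type v}
    (E : α → α → Prop) (F : β → β → Prop)
    (hE : ∀ x, ¬ E x x) (hF : ∀ y, ¬ F y y) :
    (tensorGraph (SimpleGraph.fromRel E) (SimpleGraph.fromRel F) =
      SimpleGraph.fromRel (tensorRel E F) ⊔ SimpleGraph.fromRel (tensorRel E (flip F))) ∧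
    (tensorGraph (SimpleGraph.fromRel E) (SimpleGraph.fromRel F)).chromaticNumber ≤
      (SimpleGraph.fromRel (tensorRel E F)).chromaticNumber *
        (SimpleGraph.fromRel (tensorRel E (flip F))).chromaticNumber := by
  have h := tensorGraph_fromRel hE hF
  exact ⟨h, h ▸ chromaticNumber_sup_le _ _⟩
end

section
/- If G is a graph with χ(G) > n and χ(K_n^G) ≤ n, then for every graph H with χ(H) > n, χ(G × H) > n. -/
open SimpleGraph

universe u v w

/-!
A proper `n`-colouring `C` of `G × H` curries to the map `b ↦ C(·, b)` from `H` to `K_n^G`,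
which preserves adjacency with loops allowed. A loop at `f` would make `f` an `n`-colouring
of `G`, so when `G` is not `n`-colourable it is a homomorphism into the loopless graph
`expGraph`, and an `n`-colouring of that graph pulls back to one of `H`.
-/

variable {α : Type u} {β : Type v} {γ : Type w}
  {G : SimpleGraph α} {H : SimpleGraph β} {K : SimpleGraph γ}

def expAdj.toHom {f : α → γ} (h : expAdj K G f f) : G →g K := ⟨f, fun hxy => h hxy⟩

theorem expAdj_curry (C : tensorGraph G H →g K) {b b' : β} (hbb' : H.Adj b b') :
    expAdj K G (fun a => C (a, b)) (fun a => C (a, b')) :=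
  fun _ _ hxy => C.map_rel ⟨hxy, hbb'⟩

def tensorGraph.curryHom [IsEmpty (G →g K)] (C : tensorGraph G H →g K) : H →g expGraph K G where
  toFun b a := C (a, b)
  map_rel' {b b'} hbb' := by
    refine ⟨fun heq => ?_, expAdj_curry C hbb'⟩
    have hloop : expAdj K G (fun a => C (a, b)) (fun a => C (a, b)) := by
      simpa only [← heq] using expAdj_curry C hbb'
    exact isEmptyElim hloop.toHom

theorem tensor_not_colorable_of_exp_colorable {α : Type u} (n : ℕ) (G : SimpleGraph α)
    (hG : ¬ G.Colorable n)
    (hexp : (expGraph (⊤ : SimpleGraph (Fin n)) G).Colorable n) :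
    ∀ {β : Type v} (H : SimpleGraph β), ¬ H.Colorable n →
      ¬ (tensorGraph G H).Colorable n := by
  rintro β H hH ⟨C⟩
  have : IsEmpty (G →g (⊤ : SimpleGraph (Fin n))) := not_nonempty_iff.mp hG
  exact hH (hexp.of_hom (tensorGraph.curryHom C))
end
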